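/- Let i, j ∈ ℕ and set r = ρ + i and r′ = −ρ′ − j. Then the ℂ-vector space of admissible solutions t for (r, r′) satisfying additionally t(α, α′) = 0 whenever α > i or α′ > j has dimension 1 if i − j ∈ 2ℕ, and dimension 0 otherwise. -/

import Mathlib

noncomputable section

/-- ρ = (n-1)/2 as a complex number. -/
def rho (n : ℕ) : ℂ := ((n : ℂ) - 1) / 2

/-- ρ' = (n-2)/2 as a complex number. -/
def rho' (n : ℕ) : ℂ := ((n : ℂ) - 2) / 2

/-- A diagonal sequence for `(r, r')`. -/
def IsDiagSeq (n : ℕ) (r r' : ℂ) (s : ℕ → ℂ) : Prop :=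
  ∀ α : ℕ, (2*r' + 2*(α : ℂ) + (n : ℂ) - 2) * s α
    = (2*r + 2*(α : ℂ) + (n : ℂ) - 1) * s (α + 1)

/-- L_even. -/
def Leven (n : ℕ) : Set (ℂ × ℂ) :=
  {p | ∃ i j : ℕ, p.1 = -rho n - (i : ℂ) ∧ p.2 = -rho' n - (j : ℂ) ∧ ∃ k : ℕ, i = j + 2*k}

/-- L_odd. -/
def Lodd (n : ℕ) : Set (ℂ × ℂ) :=
  {p | ∃ i j : ℕ, p.1 = -rho n - (i : ℂ) ∧ p.2 = -rho' n - (j : ℂ) ∧ ∃ k : ℕ, i = j + 2*k + 1}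

/-- An admissible solution `t : ℕ × ℕ → ℂ` for `(r, r')`:
`t(α,α') = 0` when `α' > α` or `α − α'` is odd (equivalently `α + α'` is odd),
and the relations (R1), (R2) hold for all `α ≥ α'` with `α − α'` even.
The natural-subtraction index `α - 1` is harmless, since in (R1) its coefficient
`(α − α')` vanishes when `α = α'`, and in (R2) we have `α ≥ α' ≥ 1`. -/
def IsAdmissible (n : ℕ) (r r' : ℂ) (t : ℕ → ℕ → ℂ) : Prop :=
  (∀ α α' : ℕ, (α < α' ∨ Odd (α + α')) → t α α' = 0) ∧
  (∀ α α' : ℕ, α' ≤ α → Even (α + α') →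
    ((2*(α : ℂ) + (n : ℂ) - 2) * (2*r' + 2*(α' : ℂ) + (n : ℂ) - 2) * t α α'
      = ((α : ℂ) + (α' : ℂ) + (n : ℂ) - 2) * (2*r + 2*(α : ℂ) + (n : ℂ) - 1)
          * t (α + 1) (α' + 1)
        + ((α : ℂ) - (α' : ℂ)) * (2*r - 2*(α : ℂ) - (n : ℂ) + 3)
          * t (α - 1) (α' + 1)) ∧
    (1 ≤ α' →
      (2*(α : ℂ) + (n : ℂ) - 2) * (2*r' - 2*(α' : ℂ) - (n : ℂ) + 4) * t α α'
      = ((α : ℂ) - (α' : ℂ) + 1) * (2*r + 2*(α : ℂ) + (n : ℂ) - 1)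
          * t (α + 1) (α' - 1)
        + ((α : ℂ) + (α' : ℂ) + (n : ℂ) - 3) * (2*r - 2*(α : ℂ) - (n : ℂ) + 3)
          * t (α - 1) (α' - 1)))

/-- The ℂ-vector space of admissible solutions for `(r, r')`. -/
def admSub (n : ℕ) (r r' : ℂ) : Submodule ℂ (ℕ → ℕ → ℂ) where
  carrier := {t | IsAdmissible n r r' t}
  add_mem' := by
    intro a b ha hb
    obtain ⟨ha0, haR⟩ := ha
    obtain ⟨hb0, hbR⟩ := hb
    refine ⟨fun α α' h => ?_, fun α α' h1 h2 => ⟨?_, fun h3 => ?_⟩⟩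
    · simp [Pi.add_apply, ha0 α α' h, hb0 α α' h]
    · simp only [Pi.add_apply]
      linear_combination (haR α α' h1 h2).1 + (hbR α α' h1 h2).1
    · simp only [Pi.add_apply]
      linear_combination (haR α α' h1 h2).2 h3 + (hbR α α' h1 h2).2 h3
  zero_mem' := by
    refine ⟨fun _ _ _ => rfl, fun α α' h1 h2 => ⟨by simp, fun _ => by simp⟩⟩
  smul_mem' := by
    intro c t ht
    obtain ⟨ht0, htR⟩ := ht
    refine ⟨fun α α' h => ?_, fun α α' h1 h2 => ⟨?_, fun h3 => ?_⟩⟩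
    · simp [Pi.smul_apply, ht0 α α' h]
    · simp only [Pi.smul_apply, smul_eq_mul]
      linear_combination c * (htR α α' h1 h2).1
    · simp only [Pi.smul_apply, smul_eq_mul]
      linear_combination c * (htR α α' h1 h2).2 h3

/-- Families vanishing whenever `α > i` or `α' > j`. -/
def vanSub (i j : ℕ) : Submodule ℂ (ℕ → ℕ → ℂ) where
  carrier := {t | ∀ α α' : ℕ, (i < α ∨ j < α') → t α α' = 0}
  add_mem' := by
    intro a b ha hb α α' h
    simp [Pi.add_apply, ha α α' h, hb α α' h]
  zero_mem' := fun _ _ _ => rfl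
  smul_mem' := by
    intro c t ht α α' h
    simp [Pi.smul_apply, ht α α' h]

/-!
For `r = ρ + i`, `r' = -ρ' - j` the coefficient of `t(α, α')` in (R1) is a nonzero multiple of
`α' - j`, and on row `j + 1` (where column `j + 1` vanishes) (R2) becomes the two-term recursion
`(γ + j + n - 1)(i - γ) t(γ, j) = -(γ + 1 - j)(n + i + γ) t(γ + 2, j)`, whose left coefficient
vanishes only at `γ = i`. So a solution supported in `[0, i] × [0, j]` is determined by `t(i, j)`,
which the parity condition kills unless `i - j ∈ 2ℕ`. In that case, defining column `j` by the
recursion from `t(i, j) = 1` and the lower columns by (R1) gives a solution: (R2) on a lower row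
follows from (R2) on the row above, because (R1) and (R2) are compatible.
-/

theorem Submodule.finrank_eq_one_of_disjoint_ker {K V : Type*} [Field K] [AddCommGroup V]
    [Module K V] {W : Submodule K V} (φ : V →ₗ[K] K) (hφ : Disjoint W (LinearMap.ker φ)) {v : V}
    (hv : v ∈ W) (hφv : φ v ≠ 0) : Module.finrank K W = 1 := by
  have hW : W = K ∙ v := by
    refine le_antisymm (fun w hw ↦ Submodule.mem_span_singleton.mpr ⟨φ w / φ v, ?_⟩)
      ((Submodule.span_singleton_le_iff_mem v W).mpr hv)
    have hzero := Submodule.disjoint_def.mp hφ (w - (φ w / φ v) • v)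
      (W.sub_mem hw (W.smul_mem _ hv)) (by simp [hφv])
    exact (sub_eq_zero.mp hzero).symm
  rw [hW]
  exact finrank_span_singleton fun h ↦ hφv (by simp [h])

namespace AdmissibleSolution

section Relations

variable (n i j : ℕ)

/- (R1) and (R2) at `r = ρ + i`, `r' = -ρ' - j`, divided by 2. -/

def RelOne (t : ℕ → ℕ → ℂ) (α β : ℕ) : Prop :=
  (2 * α + n - 2 : ℂ) * (β - j) * t α β =
    (α + β + n - 2 : ℂ) * (n - 1 + i + α) * t (α + 1) (β + 1)
      + (α - β : ℂ) * (i + 1 - α) * t (α - 1) (β + 1)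

def RelTwo (t : ℕ → ℕ → ℂ) (α β : ℕ) : Prop :=
  (2 * α + n - 2 : ℂ) * (3 - n - j - β) * t α β =
    (α - β + 1 : ℂ) * (n - 1 + i + α) * t (α + 1) (β - 1)
      + (α + β + n - 3 : ℂ) * (i + 1 - α) * t (α - 1) (β - 1)

theorem isAdmissible_iff {t : ℕ → ℕ → ℂ} :
    IsAdmissible n (rho n + i) (-rho' n - j) t ↔
      (∀ α β : ℕ, (α < β ∨ Odd (α + β)) → t α β = 0) ∧
      ∀ α β : ℕ, β ≤ α → Even (α + β) →
        RelOne n i j t α β ∧ (1 ≤ β → RelTwo n i j t α β) := by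
  unfold IsAdmissible RelOne RelTwo rho rho'
  refine and_congr_right fun _ ↦ forall₂_congr fun α β ↦ imp_congr_right fun _ ↦
    imp_congr_right fun _ ↦ and_congr ?_ (imp_congr_right fun _ ↦ ?_) <;>
  · constructor <;> intro h
    · linear_combination h / 2
    · linear_combination 2 * h

variable {n i j}

/- Once `t(a + 2, b)`, `t(a, b)` are eliminated by (R1) and `t(a + 2, b + 2)`, `t(a, b + 2)` by (R2),
only column `b + 1` is left and the claim is a polynomial identity. -/
theorem relTwo_of_relOne (hn : 3 ≤ n) {t : ℕ → ℕ → ℂ} {a b : ℕ} (hb : b ≠ j)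
    (h₁ : RelOne n i j t (a + 1) (b + 1)) (h₂ : RelOne n i j t (a + 2) b)
    (h₃ : RelOne n i j t a b) (h₄ : RelTwo n i j t (a + 2) (b + 2))
    (h₅ : a = b ∨ RelTwo n i j t a (b + 2)) : RelTwo n i j t (a + 1) (b + 1) := by
  have hc : (2 * a + n + 2 : ℂ) * (2 * a + n - 2) * (b - j) ≠ 0 := by
    exact_mod_cast (show ((2 * a + n + 2) * (2 * a + n - 2) * (b - j) : ℤ) ≠ 0 by simp; omega)
  unfold RelOne RelTwo at *
  simp only [Nat.add_sub_cancel, add_assoc, Nat.reduceAdd] at *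
  push_cast at *
  refine mul_left_cancel₀ hc ?_
  rcases h₅ with rfl | h₅
  · linear_combination (2 * a + n + 2 : ℂ) * (2 * a + n - 2) * (1 - n - j - a) * h₁
      - (n + i + a : ℂ) * (2 * a + n - 2) * h₂
      - (2 * a + n - 1 : ℂ) * (i - a) * (2 * a + n + 2) * h₃
      + (2 * a + n : ℂ) * (n + i + a) * (2 * a + n - 2) * h₄
  · linear_combination (2 * a + n + 2 : ℂ) * (2 * a + n - 2) * (1 - n - j - b) * h₁
      - (a - b + 1 : ℂ) * (n + i + a) * (2 * a + n - 2) * h₂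
      - (a + b + n - 1 : ℂ) * (i - a) * (2 * a + n + 2) * h₃
      + (a + b + n : ℂ) * (n + i + a) * (2 * a + n - 2) * h₄
      + (a - b : ℂ) * (i - a) * (2 * a + n + 2) * h₅

end Relations

section Uniqueness

variable {n i j : ℕ} {t : ℕ → ℕ → ℂ}

theorem column_eq_zero (hn : 3 ≤ n) (ht : t ∈ admSub n (rho n + i) (-rho' n - j) ⊓ vanSub i j)
    (h : t i j = 0) (γ : ℕ) : t γ j = 0 := by
  obtain ⟨hadm, hvan⟩ := Submodule.mem_inf.mp ht
  obtain ⟨hsupp, hrel⟩ := (isAdmissible_iff n i j).mp hadm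
  induction hd : i - γ using Nat.strong_induction_on generalizing γ with
  | _ d ih =>
  rcases lt_trichotomy γ i with hγi | rfl | hγi
  · by_cases hs : j ≤ γ ∧ Even (γ + j)
    · have hpar : Even (γ + 1 + (j + 1)) := by
        have := hs.2
        rw [Nat.even_iff] at this ⊢
        omega
      have hrec := (hrel (γ + 1) (j + 1) (by omega) hpar).2 (by omega)
      simp only [RelTwo, Nat.add_sub_cancel, hvan (γ + 1) (j + 1) (Or.inr (by omega)),
        ih (i - (γ + 2)) (by omega) (γ + 2) rfl] at hrec
      have hc : (γ + j + n - 1 : ℂ) * (i - γ) ≠ 0 := by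
        exact_mod_cast (show ((γ + j + n - 1) * (i - γ) : ℤ) ≠ 0 by simp; omega)
      refine (mul_eq_zero.mp ?_).resolve_left hc
      push_cast at hrec
      linear_combination -hrec
    · exact hsupp γ j ((not_and_or.mp hs).imp not_le.mp Nat.not_even_iff_odd.mp)
  · exact h
  · exact hvan γ j (Or.inl hγi)

theorem eq_zero_of_apply_eq_zero (hn : 3 ≤ n)
    (ht : t ∈ admSub n (rho n + i) (-rho' n - j) ⊓ vanSub i j) (h : t i j = 0) : t = 0 := by
  obtain ⟨hadm, hvan⟩ := Submodule.mem_inf.mp ht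
  obtain ⟨hsupp, hrel⟩ := (isAdmissible_iff n i j).mp hadm
  have hcols : ∀ β ≤ j, ∀ α, t α β = 0 := by
    intro β hβ
    induction hβ using Nat.decreasingInduction with
    | self => exact column_eq_zero hn ht h
    | of_succ β hβ ih =>
      intro α
      by_cases hs : β ≤ α ∧ Even (α + β)
      · have hrec := (hrel α β hs.1 hs.2).1
        simp only [RelOne, ih] at hrec
        have hc : (2 * α + n - 2 : ℂ) * (β - j) ≠ 0 := by
          exact_mod_cast (show ((2 * α + n - 2) * (β - j) : ℤ) ≠ 0 by simp; omega)
        exact (mul_eq_zero.mp (by linear_combination hrec)).resolve_left hc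
      · exact hsupp α β ((not_and_or.mp hs).imp not_le.mp Nat.not_even_iff_odd.mp)
  funext α β
  rcases le_or_gt β j with hβ | hβ
  · exact hcols β hβ α
  · exact hvan α β (Or.inr hβ)

end Uniqueness

section Existence

variable (n i j : ℕ)

def topColumn (γ : ℕ) : ℂ :=
  if i < γ ∨ γ < j then 0
  else if γ = i then 1
  else -((γ + 1 - j : ℂ) * (n + i + γ)) / ((γ + j + n - 1 : ℂ) * (i - γ)) * topColumn (γ + 2)
termination_by i - γ

def solution (α β : ℕ) : ℂ :=
  if j < β then 0
  else if β = j then topColumn n i j α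
  else ((α + β + n - 2 : ℂ) * (n - 1 + i + α) * solution (α + 1) (β + 1)
      + (α - β : ℂ) * (i + 1 - α) * solution (α - 1) (β + 1)) / ((2 * α + n - 2 : ℂ) * (β - j))
termination_by j - β

variable {n i j}

theorem topColumn_eq_zero {γ : ℕ} (h : ¬(j ≤ γ ∧ γ ≤ i ∧ Even (i + γ))) :
    topColumn n i j γ = 0 := by
  fun_induction topColumn n i j γ with
  | case1 => rfl
  | case2 hi => exact absurd ⟨by omega, le_rfl, by simp⟩ h
  | case3 γ hγ hγi ih =>
    rw [ih ?_, mul_zero]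
    rintro ⟨-, hle, hpar⟩
    exact h ⟨by omega, by omega, by rw [Nat.even_iff] at hpar ⊢; omega⟩

theorem topColumn_self (hji : j ≤ i) : topColumn n i j i = 1 := by
  rw [topColumn, if_neg (by omega), if_pos rfl]

theorem topColumn_rec (hn : 2 ≤ n) {γ : ℕ} (hγ : j ≤ γ) :
    (γ + j + n - 1 : ℂ) * (i - γ) * topColumn n i j γ =
      -((γ + 1 - j : ℂ) * (n + i + γ)) * topColumn n i j (γ + 2) := by
  rcases lt_trichotomy γ i with hγi | rfl | hγi
  · have hc : (γ + j + n - 1 : ℂ) * (i - γ) ≠ 0 := by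
      exact_mod_cast (show ((γ + j + n - 1) * (i - γ) : ℤ) ≠ 0 by simp; omega)
    rw [topColumn, if_neg (by omega), if_neg (by omega), ← mul_assoc, mul_div_cancel₀ _ hc]
  · rw [topColumn_eq_zero (γ := γ + 2) fun h ↦ absurd h.2.1 (by omega)]
    simp
  · rw [topColumn_eq_zero fun h ↦ absurd h.2.1 (by omega),
      topColumn_eq_zero fun h ↦ absurd h.2.1 (by omega)]
    simp

theorem solution_of_lt {α β : ℕ} (h : j < β) : solution n i j α β = 0 := by
  rw [solution, if_pos h]

theorem solution_column (α : ℕ) : solution n i j α j = topColumn n i j α := by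
  rw [solution, if_neg (lt_irrefl j), if_pos rfl]

theorem relOne_solution (hn : 3 ≤ n) (α β : ℕ) : RelOne n i j (solution n i j) α β := by
  unfold RelOne
  rcases lt_trichotomy β j with hβ | rfl | hβ
  · have hc : (2 * α + n - 2 : ℂ) * (β - j) ≠ 0 := by
      exact_mod_cast (show ((2 * α + n - 2) * (β - j) : ℤ) ≠ 0 by simp; omega)
    rw [solution, if_neg (by omega), if_neg (by omega), mul_div_cancel₀ _ hc]
  · simp [solution_of_lt (Nat.lt_succ_self β)]
  · simp [solution_of_lt hβ, solution_of_lt (Nat.lt_succ_of_lt hβ)]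

theorem solution_eq_zero (hij : Even (i + j)) {α β : ℕ}
    (h : ¬(β ≤ α ∧ α ≤ i ∧ β ≤ j ∧ Even (α + β))) : solution n i j α β = 0 := by
  fun_induction solution n i j α β with
  | case1 => rfl
  | case2 α =>
    refine topColumn_eq_zero fun ⟨hjα, hαi, hpar⟩ ↦ h ⟨hjα, hαi, le_rfl, ?_⟩
    rw [Nat.even_add] at hij hpar ⊢
    tauto
  | case3 α β hβ hβj ih₁ ih₂ =>
    simp only [Nat.even_iff] at h ih₁ ih₂
    rw [ih₁ (by omega), div_eq_zero_iff]
    left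
    rcases eq_or_ne α (i + 1) with rfl | hα
    · push_cast
      ring
    · rw [ih₂ (by omega)]
      ring

theorem relTwo_solution_top (hn : 2 ≤ n) {α : ℕ} (hα : j + 1 ≤ α) :
    RelTwo n i j (solution n i j) α (j + 1) := by
  obtain ⟨γ, rfl⟩ : ∃ γ, α = γ + 1 := ⟨α - 1, by omega⟩
  unfold RelTwo
  simp only [Nat.add_sub_cancel, add_assoc, Nat.reduceAdd, solution_column,
    solution_of_lt (Nat.lt_succ_self j)]
  push_cast
  linear_combination -topColumn_rec hn (i := i) (by omega : j ≤ γ)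

theorem relTwo_solution (hn : 3 ≤ n) {α β : ℕ} (hβ : 1 ≤ β) (hβα : β ≤ α) (hpar : Even (α + β)) :
    RelTwo n i j (solution n i j) α β := by
  rcases le_or_gt β (j + 1) with hβj | hβj
  · induction hβj using Nat.decreasingInduction generalizing α with
    | self => exact relTwo_solution_top (by omega) hβα
    | of_succ β hβj ih =>
      obtain ⟨a, rfl⟩ : ∃ a, α = a + 1 := ⟨α - 1, by omega⟩
      obtain ⟨b, rfl⟩ : ∃ b, β = b + 1 := ⟨β - 1, by omega⟩
      rw [Nat.even_iff] at hpar
      refine relTwo_of_relOne hn (by omega) (relOne_solution hn _ _) (relOne_solution hn _ _)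
        (relOne_solution hn _ _) (ih (by omega) (by omega) (by rw [Nat.even_iff]; omega)) ?_
      exact (eq_or_ne a b).imp_right fun hab ↦
        ih (by omega) (by omega) (by rw [Nat.even_iff]; omega)
  · have hβj' : j < β - 1 := by omega
    rw [RelTwo, solution_of_lt (by omega : j < β), solution_of_lt hβj', solution_of_lt hβj']
    ring

theorem solution_self (hji : j ≤ i) : solution n i j i j = 1 := by
  rw [solution_column, topColumn_self hji]

theorem solution_mem (hn : 3 ≤ n) (hij : Even (i + j)) :
    solution n i j ∈ admSub n (rho n + i) (-rho' n - j) ⊓ vanSub i j := by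
  refine Submodule.mem_inf.mpr ⟨(isAdmissible_iff n i j).mpr ⟨?_, ?_⟩, ?_⟩
  · rintro α β h
    refine solution_eq_zero hij fun hs ↦ ?_
    rcases h with h | h
    · exact absurd hs.1 (not_le.mpr h)
    · exact Nat.not_even_iff_odd.mpr h hs.2.2.2
  · exact fun α β hβα hpar ↦ ⟨relOne_solution hn α β, fun hβ ↦ relTwo_solution hn hβ hβα hpar⟩
  · rintro α β (h | h)
    · exact solution_eq_zero hij fun hs ↦ absurd hs.2.1 (by omega)
    · exact solution_of_lt h

end Existence

end AdmissibleSolution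

open AdmissibleSolution in
theorem statement6 (n : ℕ) (hn : 3 ≤ n) (i j : ℕ) (r r' : ℂ)
    (hr : r = rho n + (i : ℂ)) (hr' : r' = -rho' n - (j : ℂ)) :
    ((∃ k : ℕ, i = j + 2*k) →
      Module.finrank ℂ (admSub n r r' ⊓ vanSub i j : Submodule ℂ (ℕ → ℕ → ℂ)) = 1) ∧
    (¬(∃ k : ℕ, i = j + 2*k) →
      Module.finrank ℂ (admSub n r r' ⊓ vanSub i j : Submodule ℂ (ℕ → ℕ → ℂ)) = 0) := by
  subst hr hr'
  let φ : (ℕ → ℕ → ℂ) →ₗ[ℂ] ℂ :=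
    { toFun := fun t ↦ t i j, map_add' := fun _ _ ↦ rfl, map_smul' := fun _ _ ↦ rfl }
  have hφ : Disjoint (admSub n (rho n + i) (-rho' n - j) ⊓ vanSub i j) (LinearMap.ker φ) :=
    Submodule.disjoint_def.mpr fun t ht hker ↦ eq_zero_of_apply_eq_zero hn ht hker
  constructor
  · rintro ⟨k, rfl⟩
    exact Submodule.finrank_eq_one_of_disjoint_ker φ hφ (solution_mem hn ⟨j + k, by ring⟩)
      (by simp [φ, solution_self])
  · intro hodd
    suffices h : admSub n (rho n + i) (-rho' n - j) ⊓ vanSub i j = ⊥ by rw [h, finrank_bot]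
    refine eq_bot_iff.mpr fun t ht ↦ (Submodule.mem_bot ℂ).mpr (eq_zero_of_apply_eq_zero hn ht ?_)
    refine ((isAdmissible_iff n i j).mp (Submodule.mem_inf.mp ht).1).1 i j ?_
    rw [← Nat.not_even_iff_odd, Nat.even_iff]
    exact (lt_or_ge i j).imp_right fun hji hpar ↦ hodd ⟨(i - j) / 2, by omega⟩

end
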